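/- arXiv:1401.6614 — 5 statements merged into one kernel-verified Lean document; each statement's English description precedes it below -/
import Mathlib

section
/- Let n be a natural number with more than m distinct prime factors (ω(n) > m). Then for every natural number j with j ≤ m, the sum over the divisors d of n of μ(d)·(log d)^j equals 0, where μ is the Möbius function and log is the natural logarithm. -/
/-!
Inclusion–exclusion over the squarefree divisors turns the sum into
`∑_{t ⊆ P} (-1)^|t| (∑_{p ∈ t} log p)^j` with `P` the set of prime factors of `n`. Such an
alternating sum is an iterated finite difference of `y ↦ y^j`, one difference per element of `P`,
so it vanishes as soon as `|P| > j`.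
-/

open Finset

theorem add_pow_eq_sum_range_add_pow {R : Type*} [CommSemiring R] (a b : R) (j : ℕ) :
    (a + b) ^ j = ∑ k ∈ range j, b ^ k * a ^ (j - k) * j.choose k + b ^ j := by
  rw [add_comm a, add_pow, sum_range_succ]
  simp

theorem Finset.sum_powerset_neg_one_pow_card_mul_sum_pow_eq_zero {ι R : Type*} [CommRing R]
    [DecidableEq ι] (s : Finset ι) (x : ι → R) {j : ℕ} (hj : j < #s) :
    ∑ t ∈ s.powerset, (-1) ^ #t * (∑ i ∈ t, x i) ^ j = 0 := by
  induction s using Finset.induction_on generalizing j with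
  | empty => simp at hj
  | @insert a s ha ih =>
    rw [card_insert_of_notMem ha, Nat.lt_succ_iff] at hj
    have step : ∀ t ∈ s.powerset,
        (-1) ^ #t * (∑ i ∈ t, x i) ^ j + (-1) ^ #(insert a t) * (∑ i ∈ insert a t, x i) ^ j =
          -∑ k ∈ range j, j.choose k * x a ^ (j - k) * ((-1) ^ #t * (∑ i ∈ t, x i) ^ k) := by
      intro t ht
      have hat : a ∉ t := fun h ↦ ha (mem_powerset.mp ht h)
      have hsum : (-1) ^ #t * ∑ k ∈ range j, (∑ i ∈ t, x i) ^ k * x a ^ (j - k) * j.choose k =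
          ∑ k ∈ range j, j.choose k * x a ^ (j - k) * ((-1) ^ #t * (∑ i ∈ t, x i) ^ k) := by
        rw [mul_sum]
        exact sum_congr rfl fun _ _ ↦ by ring
      rw [card_insert_of_notMem hat, sum_insert hat, add_pow_eq_sum_range_add_pow]
      linear_combination -hsum
    rw [sum_powerset_insert ha, ← sum_add_distrib, sum_congr rfl step, sum_neg_distrib, sum_comm]
    simp only [← mul_sum]
    rw [sum_eq_zero fun k hk ↦ by rw [ih ((mem_range.mp hk).trans_le hj), mul_zero], neg_zero]

open ArithmeticFunction.omega in
theorem ArithmeticFunction.cardDistinctFactors_eq_card_primeFactors (n : ℕ) :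
    ω n = #n.primeFactors := by
  rw [cardDistinctFactors_apply, ← List.card_toFinset, Nat.toFinset_factors]

open ArithmeticFunction in
theorem Nat.sum_divisors_moebius_mul_eq_sum_powerset_primeFactors {R : Type*} [CommRing R]
    {n : ℕ} (hn : n ≠ 0) (f : ℕ → R) :
    ∑ d ∈ n.divisors, (moebius d : R) * f d =
      ∑ t ∈ n.primeFactors.powerset, (-1) ^ #t * f (∏ p ∈ t, p) := by
  rw [← sum_filter_of_ne (p := Squarefree) fun d _ hd ↦ ?_, Nat.sum_divisors_filter_squarefree hn,
    Nat.factors_eq]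
  · refine sum_congr rfl fun t ht ↦ ?_
    have ht : t ⊆ n.primeFactors := mem_powerset.mp ht
    have hμ : moebius (∏ p ∈ t, p) = (-1) ^ #t := by
      rw [isMultiplicative_moebius.map_prod_of_subset_primeFactors n t ht,
        prod_congr rfl fun p hp ↦ moebius_apply_prime (Nat.prime_of_mem_primeFactors (ht hp)),
        prod_const]
    rw [t.prod_val, Function.id_def, hμ, Int.cast_pow, Int.cast_neg, Int.cast_one]
  · by_contra hsq
    simp [moebius_eq_zero_of_not_squarefree hsq] at hd

open ArithmeticFunction ArithmeticFunction.omega ArithmeticFunction.Moebius in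
/-- If `n` has more than `m` distinct prime factors, then for every `j ≤ m`,
`∑_{d ∣ n} μ(d) (log d)^j = 0`. -/
theorem moebius_log_pow_sum_eq_zero (n m : ℕ) (hn : m < ω n) (j : ℕ) (hj : j ≤ m) :
    ∑ d ∈ n.divisors, (μ d : ℝ) * (Real.log d) ^ j = 0 := by
  have hn0 : n ≠ 0 := by rintro rfl; simp at hn
  rw [Nat.sum_divisors_moebius_mul_eq_sum_powerset_primeFactors hn0]
  have hlog : ∀ t ∈ n.primeFactors.powerset, Real.log (∏ p ∈ t, p : ℕ) = ∑ p ∈ t, Real.log p :=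
    fun t ht ↦ by
      rw [Nat.cast_prod, Real.log_prod fun p hp ↦ Nat.cast_ne_zero.2
        (Nat.prime_of_mem_primeFactors (mem_powerset.mp ht hp)).ne_zero]
  rw [sum_congr rfl fun t ht ↦ by rw [hlog t ht]]
  exact sum_powerset_neg_one_pow_card_mul_sum_pow_eq_zero _ _
    (by rw [← cardDistinctFactors_eq_card_primeFactors]; omega)
end

section
/- There exists an admissible 105-tuple of natural numbers h₁ < h₂ < ⋯ < h₁₀₅ with h₁₀₅ − h₁ = 600. -/
/-- A tuple `h : Fin k → ℕ` is admissible if for every prime `p` the residues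
`h j mod p` do not cover all of the `p` residue classes. -/
def Admissible {k : ℕ} (h : Fin k → ℕ) : Prop :=
  ∀ p : ℕ, p.Prime → (Finset.univ.image fun j => h j % p).card < p

/-!
A prime `p > k` can never be covered by the `k` residues of a `k`-tuple, so admissibility only
has to be checked at the primes `p ≤ 105`, where the witness avoids an explicit residue class
found by computation.
-/

open Finset

theorem card_image_mod_lt_of_lt {k p : ℕ} (h : Fin k → ℕ) (hk : k < p) :
    (univ.image fun j => h j % p).card < p :=
  (card_image_le.trans_eq (card_fin k)).trans_lt hk

theorem card_image_mod_lt_of_forall_ne {k p a : ℕ} (h : Fin k → ℕ) (ha : a < p)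
    (hh : ∀ j, h j % p ≠ a) : (univ.image fun j => h j % p).card < p := by
  have hsub : univ.image (fun j => h j % p) ⊆ (range p).erase a := by
    intro r hr
    obtain ⟨j, -, rfl⟩ := mem_image.mp hr
    exact mem_erase.mpr ⟨hh j, mem_range.mpr (Nat.mod_lt _ (by omega))⟩
  calc _ ≤ ((range p).erase a).card := card_le_card hsub
    _ < (range p).card := card_erase_lt_of_mem (mem_range.mpr ha)
    _ = p := card_range p

theorem admissible_of_forall_prime_le {k : ℕ} (h : Fin k → ℕ)
    (hsmall : ∀ p ≤ k, p.Prime → ∃ a < p, ∀ j, h j % p ≠ a) : Admissible h := by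
  intro p hp
  by_cases hpk : p ≤ k
  · obtain ⟨a, ha, hh⟩ := hsmall p hpk hp
    exact card_image_mod_lt_of_forall_ne h ha hh
  · exact card_image_mod_lt_of_lt h (not_le.mp hpk)

/-- The integers in `[0, 600]` that survive removing one residue class `a_p mod p` for each
prime `p ≤ 47`, namely `a_p = 1, 1, 4, 3, 1, 9, 10, 9, 11, 23, 13, 9, 28, 22, 38`. -/
def tuple600 : Fin 105 → ℕ := fun j =>
  [0, 2, 6, 8, 18, 20, 26, 30, 32, 36, 42, 50, 60, 62, 68, 72, 86, 90, 92, 96, 98,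
   102, 116, 128, 138, 140, 156, 158, 162, 170, 176, 182, 186, 198, 200, 212, 216,
   222, 228, 236, 240, 242, 246, 252, 258, 260, 266, 270, 272, 278, 288, 296, 300,
   302, 306, 312, 326, 330, 336, 338, 348, 362, 368, 372, 378, 380, 390, 392, 396,
   398, 410, 420, 422, 426, 428, 432, 440, 450, 456, 462, 468, 470, 476, 480, 482,
   488, 492, 498, 506, 510, 512, 530, 536, 546, 548, 552, 558, 566, 572, 576, 578,
   582, 590, 596, 600].getD j 0

theorem tuple600_strictMono : StrictMono tuple600 :=
  Fin.strictMono_iff_lt_succ.mpr (by decide)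

set_option maxRecDepth 100000 in
theorem tuple600_avoids_residue :
    ∀ p ≤ 105, p.Prime → ∃ a < p, ∀ j, tuple600 j % p ≠ a := by
  decide

/-- There is an admissible `105`-tuple `h₁ < ⋯ < h₁₀₅` of diameter `h₁₀₅ − h₁ = 600`. -/
theorem exists_admissible_105_tuple_diameter_600 :
    ∃ h : Fin 105 → ℕ, StrictMono h ∧ Admissible h ∧
      h ⟨104, by norm_num⟩ - h ⟨0, by norm_num⟩ = 600 :=
  ⟨tuple600, tuple600_strictMono, admissible_of_forall_prime_le _ tuple600_avoids_residue, rfl⟩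
end

section
/- Let d and f be squarefree positive integers. Then φ(d)·φ(f) = φ(lcm(d,f)) · ∑_{u ∣ gcd(d,f)} γ(u), where γ(u) = ∏_{p ∣ u} (p − 2) is the product of (p − 2) over the distinct primes p dividing u (with γ(1) = 1), and φ is Euler's totient function. -/
/-! Since `φ n = n ∏_{p ∣ n} (1 - 1/p)`, the identity `φ d φ f = φ (lcm d f) φ (gcd d f)` holds for
all `d, f`. For squarefree `g` one has `φ g = ∏_{p ∣ g} (1 + (p - 2))`, and expanding this product
over the subsets of the prime factors of `g`, i.e. over the divisors of `g`, gives `∑_{u ∣ g} γ u`. -/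

open ArithmeticFunction

namespace Nat

theorem totient_mul_totient_eq_totient_lcm_mul_totient_gcd (a b : ℕ) :
    φ a * φ b = φ (a.lcm b) * φ (a.gcd b) := by
  rcases eq_zero_or_pos (a.gcd b) with hg | hg
  · simp [(gcd_eq_zero_iff.mp hg).1]
  have hgcd : (a.lcm b).gcd (a.gcd b) = a.gcd b :=
    gcd_eq_right ((gcd_dvd_left a b).trans (dvd_lcm_left a b))
  have hprod : a.lcm b * a.gcd b = a * b := by rw [mul_comm, gcd_mul_lcm]
  have h := totient_gcd_mul_totient_mul (a.lcm b) (a.gcd b)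
  rw [hgcd, hprod, totient_gcd_mul_totient_mul a b] at h
  exact Nat.eq_of_mul_eq_mul_right hg h

theorem totient_eq_prod_primeFactors_sub_one_of_squarefree {n : ℕ} (hn : Squarefree n) :
    φ n = ∏ p ∈ n.primeFactors, (p - 1) := by
  have h := totient_mul_prod_primeFactors n
  rw [prod_primeFactors_of_squarefree hn, mul_comm] at h
  exact Nat.eq_of_mul_eq_mul_left (pos_of_ne_zero hn.ne_zero) h

theorem sum_divisors_prod_primeFactors_of_squarefree {R : Type*} [CommSemiring R]
    (f : ℕ → R) {n : ℕ} (hn : Squarefree n) :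
    ∑ d ∈ n.divisors, ∏ p ∈ d.primeFactors, f p = ∏ p ∈ n.primeFactors, (1 + f p) := by
  calc ∑ d ∈ n.divisors, ∏ p ∈ d.primeFactors, f p
      = ∑ d ∈ n.divisors, prodPrimeFactors f d :=
        Finset.sum_congr rfl fun d hd => (prodPrimeFactors_apply (pos_of_mem_divisors hd).ne').symm
    _ = ∏ p ∈ n.primeFactors, (1 + prodPrimeFactors f p) :=
        ((IsMultiplicative.prodPrimeFactors f).prodPrimeFactors_one_add_of_squarefree hn).symm
    _ = ∏ p ∈ n.primeFactors, (1 + f p) := by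
        refine Finset.prod_congr rfl fun p hp => ?_
        have hp := prime_of_mem_primeFactors hp
        rw [prodPrimeFactors_apply hp.ne_zero, hp.primeFactors, Finset.prod_singleton]

theorem totient_eq_sum_divisors_prod_primeFactors_sub_two {n : ℕ} (hn : Squarefree n) :
    φ n = ∑ u ∈ n.divisors, ∏ p ∈ u.primeFactors, (p - 2) := by
  rw [sum_divisors_prod_primeFactors_of_squarefree _ hn,
    totient_eq_prod_primeFactors_sub_one_of_squarefree hn]
  refine Finset.prod_congr rfl fun p hp => ?_
  have := (prime_of_mem_primeFactors hp).two_le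
  omega

end Nat

theorem totient_mul_eq_totient_lcm_mul_sum_gamma_general (d f : ℕ)
    (hsd : Squarefree d) :
    Nat.totient d * Nat.totient f =
      Nat.totient (Nat.lcm d f) *
        ∑ u ∈ (Nat.gcd d f).divisors, ∏ p ∈ u.primeFactors, (p - 2) := by
  have hsg : Squarefree (d.gcd f) := hsd.squarefree_of_dvd (d.gcd_dvd_left f)
  rw [Nat.totient_mul_totient_eq_totient_lcm_mul_totient_gcd,
    Nat.totient_eq_sum_divisors_prod_primeFactors_sub_two hsg]

/-- For squarefree positive integers `d, f`:
`φ(d)·φ(f) = φ(lcm(d,f)) · ∑_{u ∣ gcd(d,f)} γ(u)` where `γ(u) = ∏_{p ∣ u} (p − 2)`. -/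
theorem totient_mul_eq_totient_lcm_mul_sum_gamma (d f : ℕ) (hd : 0 < d) (hf : 0 < f)
    (hsd : Squarefree d) (hsf : Squarefree f) :
    Nat.totient d * Nat.totient f =
      Nat.totient (Nat.lcm d f) *
        ∑ u ∈ (Nat.gcd d f).divisors, ∏ p ∈ u.primeFactors, (p - 2) :=
  totient_mul_eq_totient_lcm_mul_sum_gamma_general d f hsd
end

section
/- There exists a constant C > 0 such that for every real Y ≥ 2, the sum of 1/φ(v)² over all integers v > 1 all of whose prime factors exceed Y satisfies ∑_{v > 1, p ∣ v ⇒ p > Y} 1/φ(v)² ≤ C / Y. (In particular this series converges.) -/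
/-!
Write a rough `v > 1` as `p * m` with `p` its least prime factor. Since `φ` is
super-multiplicative, `1/φ(v)² ≤ 1/φ(p)² · 1/φ(m)²`, and `m` is again rough (or `1`). So every
partial sum `S` of the series satisfies `S ≤ c (1 + S)`, where `c` bounds the sum of `1/(p-1)²`
over primes `p > Y`. These primes are odd, so `(p-1)/2` runs over distinct integers
`≥ K = ⌊Y/2⌋` and `c = 1/(2K) ≤ 1/2` works. Hence `S ≤ 2c ≤ 4/Y`.
-/

open Finset

def IsRough (Y : ℝ) (n : ℕ) : Prop :=
  ∀ p : ℕ, p.Prime → p ∣ n → Y < p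

theorem IsRough.of_dvd {Y : ℝ} {m n : ℕ} (hn : IsRough Y n) (hmn : m ∣ n) : IsRough Y m :=
  fun p hp hpm => hn p hp (hpm.trans hmn)

theorem one_div_totient_sq_mul_le (a b : ℕ) :
    1 / ((a * b).totient : ℝ) ^ 2 ≤ 1 / (a.totient : ℝ) ^ 2 * (1 / (b.totient : ℝ) ^ 2) := by
  rcases Nat.eq_zero_or_pos (a * b) with hab | hab
  · rw [hab, Nat.totient_zero, Nat.cast_zero, zero_pow two_ne_zero, div_zero]
    positivity
  · have ha : 0 < a.totient := Nat.totient_pos.mpr (Nat.pos_of_mul_pos_right hab)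
    have hb : 0 < b.totient := Nat.totient_pos.mpr (Nat.pos_of_mul_pos_left hab)
    rw [one_div_mul_one_div, ← mul_pow]
    apply one_div_le_one_div_of_le (by positivity)
    exact_mod_cast Nat.pow_le_pow_left (Nat.totient_super_multiplicative a b) 2

theorem sum_indicator_rough_le_mul {f : ℕ → ℝ} (hf₀ : ∀ n, 0 ≤ f n)
    (hf : ∀ a b, f (a * b) ≤ f a * f b) {Y c : ℝ}
    (hc : ∀ P : Finset ℕ, (∀ p ∈ P, p.Prime ∧ Y < p) → ∑ p ∈ P, f p ≤ c) (N : ℕ) :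
    ∑ v ∈ range N, {v | 1 < v ∧ IsRough Y v}.indicator f v ≤
      c * (f 1 + ∑ v ∈ range N, {v | 1 < v ∧ IsRough Y v}.indicator f v) := by
  classical
  rw [sum_indicator_eq_sum_filter]
  simp only [Set.mem_ofPred_eq]
  set A := (range N).filter (fun v => 1 < v ∧ IsRough Y v)
  set P := (range N).filter (fun p : ℕ => p.Prime ∧ Y < p)
  have hfactor : ∀ v : ℕ, v.minFac * (v / v.minFac) = v := fun v => Nat.mul_div_cancel' v.minFac_dvd
  have hmaps : ∀ v ∈ A, (v.minFac, v / v.minFac) ∈ P ×ˢ insert 1 A := by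
    intro v hv
    simp only [A, P, mem_filter, mem_range, mem_product, mem_insert] at hv ⊢
    obtain ⟨hvN, hv1, hrough⟩ := hv
    have hp := Nat.minFac_prime hv1.ne'
    have hlt : v / v.minFac < N := (Nat.div_le_self _ _).trans_lt hvN
    refine ⟨⟨(Nat.minFac_le (by omega)).trans_lt hvN, hp, hrough _ hp v.minFac_dvd⟩, ?_⟩
    have hpos : 0 < v / v.minFac := Nat.div_pos (Nat.minFac_le (by omega)) v.minFac_pos
    rcases Nat.lt_or_ge 1 (v / v.minFac) with h | h
    · exact Or.inr ⟨hlt, h, hrough.of_dvd (Nat.div_dvd_of_dvd v.minFac_dvd)⟩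
    · exact Or.inl (by omega)
  have hinj : Set.InjOn (fun v : ℕ => (v.minFac, v / v.minFac)) A := by
    intro v _ w _ hvw
    simp only [Prod.mk.injEq] at hvw
    rw [← hfactor v, hvw.2, hvw.1, hfactor]
  have h1 : 1 ∉ A := by simp [A]
  calc ∑ v ∈ A, f v ≤ ∑ v ∈ A, f v.minFac * f (v / v.minFac) :=
        sum_le_sum fun v _ => by simpa only [hfactor] using hf v.minFac (v / v.minFac)
    _ = ∑ q ∈ A.image (fun v => (v.minFac, v / v.minFac)), f q.1 * f q.2 :=
        (sum_image (f := fun q : ℕ × ℕ => f q.1 * f q.2) hinj).symm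
    _ ≤ ∑ q ∈ P ×ˢ insert 1 A, f q.1 * f q.2 :=
        sum_le_sum_of_subset_of_nonneg (image_subset_iff.2 hmaps)
          fun q _ _ => mul_nonneg (hf₀ _) (hf₀ _)
    _ = (∑ p ∈ P, f p) * (f 1 + ∑ v ∈ A, f v) := by
        rw [sum_product, ← sum_insert h1, sum_mul_sum]
    _ ≤ c * (f 1 + ∑ v ∈ A, f v) :=
        mul_le_mul_of_nonneg_right (hc P fun p hp => (mem_filter.1 hp).2)
          (add_nonneg (hf₀ 1) (sum_nonneg fun v _ => hf₀ v))

theorem sum_one_div_totient_sq_le_of_forall_prime {K : ℕ} (hK : 0 < K) (P : Finset ℕ)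
    (hP : ∀ p ∈ P, p.Prime ∧ 2 * K < p) :
    ∑ p ∈ P, 1 / (p.totient : ℝ) ^ 2 ≤ 1 / (2 * K : ℝ) := by
  obtain ⟨k, rfl⟩ := Nat.exists_eq_add_one_of_ne_zero hK.ne'
  have hodd : ∀ p ∈ P, p = 2 * (p / 2) + 1 := fun p hp => by
    have hp2 : p ≠ 2 := by have := (hP p hp).2; omega
    obtain ⟨m, rfl⟩ := (hP p hp).1.odd_of_ne_two hp2
    omega
  obtain ⟨n, hPn⟩ := Finset.exists_nat_subset_range P
  have hmaps : ∀ p ∈ P, p / 2 ∈ Ioo k n := fun p hp => by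
    have := (hP p hp).2
    have := mem_range.1 (hPn hp)
    rw [mem_Ioo]
    omega
  have hinj : Set.InjOn (fun p : ℕ => p / 2) P := fun p hp q hq hpq => by
    rw [hodd p hp, hodd q hq]
    simp only at hpq
    rw [hpq]
  calc ∑ p ∈ P, 1 / (p.totient : ℝ) ^ 2 = ∑ p ∈ P, 1 / 4 * (((p / 2 : ℕ) : ℝ) ^ 2)⁻¹ := by
        refine sum_congr rfl fun p hp => ?_
        have := hodd p hp
        rw [Nat.totient_prime (hP p hp).1, show p - 1 = 2 * (p / 2) by omega]
        push_cast
        ring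
    _ = 1 / 4 * ∑ j ∈ P.image (fun p : ℕ => p / 2), ((j : ℝ) ^ 2)⁻¹ := by
        rw [mul_sum, sum_image hinj]
    _ ≤ 1 / 4 * ∑ j ∈ Ioo k n, ((j : ℝ) ^ 2)⁻¹ := by
        gcongr ?_ * ?_
        exact sum_le_sum_of_subset_of_nonneg (image_subset_iff.2 hmaps) fun j _ _ => by positivity
    _ ≤ 1 / 4 * (2 / (k + 1)) := by gcongr; exact sum_Ioo_inv_sq_le k n
    _ = 1 / (2 * ((k + 1 : ℕ) : ℝ)) := by push_cast; field_simp; ring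

/-- The sum of `1/φ(v)²` over integers `v > 1` all of whose prime factors exceed `Y`
converges and is `≪ 1/Y`. -/
theorem sum_one_div_totient_sq_rough_le :
    ∃ C : ℝ, 0 < C ∧ ∀ Y : ℝ, 2 ≤ Y →
      Summable (fun v : {v : ℕ // 1 < v ∧ ∀ p : ℕ, p.Prime → p ∣ v → Y < p} =>
        (1 : ℝ) / (Nat.totient v : ℝ) ^ 2) ∧
      ∑' v : {v : ℕ // 1 < v ∧ ∀ p : ℕ, p.Prime → p ∣ v → Y < p},
        (1 : ℝ) / (Nat.totient v : ℝ) ^ 2 ≤ C / Y := by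
  refine ⟨4, by norm_num, fun Y hY => ?_⟩
  set f : ℕ → ℝ := fun n => 1 / (n.totient : ℝ) ^ 2
  set A : Set ℕ := {v | 1 < v ∧ IsRough Y v}
  have hf₀ : ∀ n, 0 ≤ A.indicator f n := fun n => Set.indicator_nonneg (fun _ _ => by positivity) n
  set K := ⌊Y / 2⌋₊
  have hK : 0 < K := Nat.floor_pos.2 (by linarith)
  have hK1 : (1 : ℝ) ≤ K := by exact_mod_cast hK
  have hKY : (2 * K : ℝ) ≤ Y := by linarith [Nat.floor_le (by linarith : (0 : ℝ) ≤ Y / 2)]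
  have hYK : Y < 2 * K + 2 := by linarith [Nat.lt_floor_add_one (Y / 2)]
  have hprimes (P : Finset ℕ) (hP : ∀ p ∈ P, p.Prime ∧ Y < p) : ∑ p ∈ P, f p ≤ 1 / (2 * K) :=
    sum_one_div_totient_sq_le_of_forall_prime hK P fun p hp =>
      ⟨(hP p hp).1, by exact_mod_cast hKY.trans_lt (hP p hp).2⟩
  have hpartial (N : ℕ) : ∑ v ∈ range N, A.indicator f v ≤ 4 / Y := by
    have hrec := sum_indicator_rough_le_mul (by intro; positivity) one_div_totient_sq_mul_le hprimes N
    have hf1 : f 1 = 1 := by simp [f]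
    rw [hf1] at hrec
    set S := ∑ v ∈ range N, A.indicator f v
    have hS : 0 ≤ S := sum_nonneg fun v _ => hf₀ v
    have hc : 1 / (2 * K : ℝ) ≤ 1 / 2 := by gcongr; linarith
    calc S ≤ 2 * (1 / (2 * K)) := by nlinarith
      _ ≤ 4 / Y := by rw [mul_one_div, div_le_div_iff₀ (by positivity) (by linarith)]; linarith
  exact ⟨summable_subtype_iff_indicator.2 (summable_of_sum_range_le hf₀ hpartial),
    (tsum_subtype A f).trans_le (Real.tsum_le_of_sum_range_le hf₀ hpartial)⟩
end

section
/- Let λ : ℕ × ℕ → ℝ be a function with finite support such that λ(d₁, d₂) = 0 unless d₁·d₂ is squarefree (in particular, unless d₁ and d₂ are coprime squarefree positive integers). Define η(w₁, w₂) = μ(w₁)·μ(w₂)·φ(w₁)·φ(w₂) · ∑_{d₁, d₂ : w₁ ∣ d₁, w₂ ∣ d₂} λ(d₁, d₂)/(d₁·d₂). Then for all positive integers d₁, d₂ with d₁·d₂ squarefree: λ(d₁, d₂) = μ(d₁)·μ(d₂)·d₁·d₂ · ∑_{w₁, w₂ : d₁ ∣ w₁, d₂ ∣ w₂} μ(w₁·w₂)²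 · η(w₁, w₂)/(φ(w₁)·φ(w₂)). -/
open ArithmeticFunction
open scoped ArithmeticFunction.Moebius

/-! Substituting `η`, the totients cancel and the weight `μ(w₁w₂)²` is `1` on the support, so
the right-hand side becomes `∑_{d ∣ w} μ(w₁)μ(w₂) ∑_{w ∣ e} λ(e)/(e₁e₂)`. Swapping the two
sums, the coefficient of `λ(e)` factors into two sums `∑_{d ∣ w ∣ n} μ(w)` with `n` squarefree,
and each of these vanishes unless `n = d` (dual Möbius inversion). Only `e = d` survives. -/

theorem finsum_cond_eq_sum_filter {α M : Type*} [AddCommMonoid M] {f : α → M} {s : Finset α}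
    (hf : Function.support f ⊆ s) (p : α → Prop) [DecidablePred p] :
    ∑ᶠ (i) (_ : p i), f i = ∑ i ∈ s with p i, f i :=
  finsum_cond_eq_sum_of_cond_iff f fun hx => by simp [Finset.mem_coe.mp (hf hx)]

theorem sum_moebius_divisors_filter_dvd {n d : ℕ} (hn : Squarefree n) :
    ∑ w ∈ n.divisors with d ∣ w, μ w = if n = d then μ d else 0 := by
  by_cases hdn : d ∣ n
  case neg =>
    have hne : n ≠ d := by rintro rfl; exact hdn dvd_rfl
    rw [if_neg hne, Finset.sum_eq_zero]
    intro w hw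
    simp only [Finset.mem_filter, Nat.mem_divisors] at hw
    exact absurd (hw.2.trans hw.1.1) hdn
  obtain ⟨m, rfl⟩ := hdn
  obtain ⟨hcop, -, -⟩ := Nat.squarefree_mul_iff.mp hn
  have hd : 0 < d := Nat.pos_of_ne_zero (left_ne_zero_of_mul hn.ne_zero)
  have himage : {w ∈ (d * m).divisors | d ∣ w} = m.divisors.image (d * ·) := by
    ext w
    simp only [Finset.mem_filter, Finset.mem_image, Nat.mem_divisors]
    constructor
    · rintro ⟨⟨hw, hdm⟩, t, rfl⟩
      exact ⟨t, ⟨Nat.dvd_of_mul_dvd_mul_left hd hw, right_ne_zero_of_mul hdm⟩, rfl⟩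
    · rintro ⟨t, ⟨ht, hm⟩, rfl⟩
      exact ⟨⟨mul_dvd_mul_left d ht, mul_ne_zero hd.ne' hm⟩, dvd_mul_right d t⟩
  have hmul : ∀ t ∈ m.divisors, μ (d * t) = μ d * μ t := fun t ht =>
    isMultiplicative_moebius.map_mul_of_coprime
      (hcop.coprime_dvd_right (Nat.dvd_of_mem_divisors ht))
  rw [himage, Finset.sum_image fun _ _ _ _ h => Nat.eq_of_mul_eq_mul_left hd h,
    Finset.sum_congr rfl hmul, ← Finset.mul_sum, ← coe_mul_zeta_apply, moebius_mul_coe_zeta,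
    one_apply]
  simp [hd.ne']

theorem sum_moebius_sq_mul_moebius_mul_moebius {e : ℕ × ℕ} {d₁ d₂ : ℕ}
    (he : Squarefree (e.1 * e.2)) :
    ∑ w ∈ e.1.divisors ×ˢ e.2.divisors with d₁ ∣ w.1 ∧ d₂ ∣ w.2,
      (μ (w.1 * w.2) : ℝ) ^ 2 * μ w.1 * μ w.2 =
        if e = (d₁, d₂) then (μ d₁ : ℝ) * μ d₂ else 0 := by
  have hsq : ∀ w ∈ e.1.divisors ×ˢ e.2.divisors, (μ (w.1 * w.2) : ℝ) ^ 2 = 1 := by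
    intro w hw
    rw [Finset.mem_product, Nat.mem_divisors, Nat.mem_divisors] at hw
    exact_mod_cast moebius_sq_eq_one_of_squarefree
      (he.squarefree_of_dvd (mul_dvd_mul hw.1.1 hw.2.1))
  have h₁ : ∑ w ∈ e.1.divisors with d₁ ∣ w, (μ w : ℝ) = if e.1 = d₁ then (μ d₁ : ℝ) else 0 := by
    exact_mod_cast sum_moebius_divisors_filter_dvd (he.squarefree_of_dvd (dvd_mul_right _ _))
  have h₂ : ∑ w ∈ e.2.divisors with d₂ ∣ w, (μ w : ℝ) = if e.2 = d₂ then (μ d₂ : ℝ) else 0 := by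
    exact_mod_cast sum_moebius_divisors_filter_dvd (he.squarefree_of_dvd (dvd_mul_left _ _))
  rw [Finset.sum_congr rfl fun w hw => by rw [hsq w (Finset.mem_filter.mp hw).1, one_mul],
    Finset.filter_product (d₁ ∣ ·) (d₂ ∣ ·), Finset.sum_product]
  dsimp only
  rw [← Finset.sum_mul_sum, h₁, h₂]
  split_ifs <;> simp_all [Prod.ext_iff]

theorem mem_divisors_product_divisors_iff {e w : ℕ × ℕ} (he : e.1 * e.2 ≠ 0) :
    w ∈ e.1.divisors ×ˢ e.2.divisors ↔ w.1 ∣ e.1 ∧ w.2 ∣ e.2 := by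
  simp [left_ne_zero_of_mul he, right_ne_zero_of_mul he]

section DivisorPairs

variable {M : Type*} [AddCommMonoid M] {S : Finset (ℕ × ℕ)}

theorem support_sum_filter_dvd_subset (hS : ∀ e ∈ S, e.1 * e.2 ≠ 0) (f : ℕ × ℕ → ℕ × ℕ → M) :
    Function.support (fun w => ∑ e ∈ S with w.1 ∣ e.1 ∧ w.2 ∣ e.2, f w e) ⊆
      S.biUnion fun e => e.1.divisors ×ˢ e.2.divisors := by
  intro w hw
  obtain ⟨e, he, -⟩ := Finset.exists_ne_zero_of_sum_ne_zero hw
  obtain ⟨heS, hwe⟩ := Finset.mem_filter.mp he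
  exact Finset.mem_biUnion.mpr ⟨e, heS, (mem_divisors_product_divisors_iff (hS e heS)).mpr hwe⟩

theorem sum_filter_sum_filter_dvd_comm (hS : ∀ e ∈ S, e.1 * e.2 ≠ 0) (p : ℕ × ℕ → Prop)
    [DecidablePred p] (f : ℕ × ℕ → ℕ × ℕ → M) :
    ∑ w ∈ S.biUnion (fun e => e.1.divisors ×ˢ e.2.divisors) with p w,
        ∑ e ∈ S with w.1 ∣ e.1 ∧ w.2 ∣ e.2, f w e =
      ∑ e ∈ S, ∑ w ∈ e.1.divisors ×ˢ e.2.divisors with p w, f w e := by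
  refine Finset.sum_comm' fun w e => ?_
  simp only [Finset.mem_filter, Finset.mem_biUnion]
  constructor
  · rintro ⟨⟨-, hpw⟩, heS, hwe⟩
    exact ⟨⟨(mem_divisors_product_divisors_iff (hS e heS)).mpr hwe, hpw⟩, heS⟩
  · rintro ⟨⟨hw, hpw⟩, heS⟩
    exact ⟨⟨⟨e, heS, hw⟩, hpw⟩, heS, (mem_divisors_product_divisors_iff (hS e heS)).mp hw⟩

end DivisorPairs

theorem finsum_multiples_moebius_mul_finsum_multiples {g : ℕ × ℕ → ℝ}
    (hfin : (Function.support g).Finite)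
    (hsq : ∀ e : ℕ × ℕ, ¬ Squarefree (e.1 * e.2) → g e = 0) (d₁ d₂ : ℕ) :
    ∑ᶠ (w : ℕ × ℕ) (_ : d₁ ∣ w.1 ∧ d₂ ∣ w.2), (μ (w.1 * w.2) : ℝ) ^ 2 * μ w.1 * μ w.2 *
        ∑ᶠ (e : ℕ × ℕ) (_ : w.1 ∣ e.1 ∧ w.2 ∣ e.2), g e =
      μ d₁ * μ d₂ * g (d₁, d₂) := by
  set S := hfin.toFinset
  have hS : ∀ e ∈ S, Squarefree (e.1 * e.2) := fun e he =>
    not_not.mp fun h => hfin.mem_toFinset.mp he (hsq e h)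
  have hS₀ : ∀ e ∈ S, e.1 * e.2 ≠ 0 := fun e he => (hS e he).ne_zero
  simp_rw [finsum_cond_eq_sum_filter hfin.coe_toFinset.ge, Finset.mul_sum]
  rw [finsum_cond_eq_sum_filter (support_sum_filter_dvd_subset hS₀ _),
    sum_filter_sum_filter_dvd_comm hS₀]
  calc _ = ∑ e ∈ S, (if e = (d₁, d₂) then (μ d₁ : ℝ) * μ d₂ else 0) * g e :=
        Finset.sum_congr rfl fun e he => by
          rw [← Finset.sum_mul, sum_moebius_sq_mul_moebius_mul_moebius (hS e he)]
    _ = _ := by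
        refine (Finset.sum_eq_single (d₁, d₂) (fun e _ hne => by rw [if_neg hne, zero_mul])
          fun hdS => ?_).trans (by rw [if_pos rfl])
        rw [hfin.mem_toFinset, Function.mem_support, not_not] at hdS
        rw [hdS, mul_zero]

-- At `n = 0` the division is by zero, but then `μ n = 0`.
theorem moebius_mul_totient_div_totient (n : ℕ) :
    (μ n : ℝ) * Nat.totient n / Nat.totient n = μ n := by
  rcases eq_or_ne n 0 with rfl | hn
  · simp
  · have : (Nat.totient n : ℝ) ≠ 0 := by exact_mod_cast (Nat.totient_pos.mpr hn.bot_lt).ne'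
    field_simp

/-- (Selberg/Maynard change of variables, two-dimensional Möbius inversion.)
If `λ` has finite support and `λ(d₁,d₂) = 0` unless `d₁·d₂` is squarefree, and
`η(w₁,w₂) = μ(w₁)μ(w₂)φ(w₁)φ(w₂) ∑_{w₁∣d₁, w₂∣d₂} λ(d₁,d₂)/(d₁d₂)`,
then for `d₁·d₂` squarefree (with `d₁, d₂ > 0`):
`λ(d₁,d₂) = μ(d₁)μ(d₂)d₁d₂ ∑_{d₁∣w₁, d₂∣w₂} μ(w₁w₂)² η(w₁,w₂)/(φ(w₁)φ(w₂))`. -/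
theorem lambda_eta_moebius_inversion
    (lam : ℕ × ℕ → ℝ)
    (hfin : (Function.support lam).Finite)
    (hsq : ∀ d : ℕ × ℕ, ¬ Squarefree (d.1 * d.2) → lam d = 0)
    (eta : ℕ × ℕ → ℝ)
    (heta : ∀ w : ℕ × ℕ,
      eta w = (μ w.1 : ℝ) * (μ w.2 : ℝ) * (Nat.totient w.1) * (Nat.totient w.2) *
        ∑ᶠ (d : ℕ × ℕ) (_ : w.1 ∣ d.1 ∧ w.2 ∣ d.2), lam d / ((d.1 : ℝ) * d.2)) :
    ∀ d₁ d₂ : ℕ, 0 < d₁ → 0 < d₂ → Squarefree (d₁ * d₂) →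
      lam (d₁, d₂) = (μ d₁ : ℝ) * (μ d₂ : ℝ) * d₁ * d₂ *
        ∑ᶠ (w : ℕ × ℕ) (_ : d₁ ∣ w.1 ∧ d₂ ∣ w.2),
          ((μ (w.1 * w.2) : ℝ)) ^ 2 * eta w / ((Nat.totient w.1 : ℝ) * Nat.totient w.2) := by
  intro d₁ d₂ _ _ hd
  have hsummand : ∀ w : ℕ × ℕ,
      (μ (w.1 * w.2) : ℝ) ^ 2 * eta w / ((Nat.totient w.1 : ℝ) * Nat.totient w.2) =
        (μ (w.1 * w.2) : ℝ) ^ 2 * μ w.1 * μ w.2 *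
          ∑ᶠ (e : ℕ × ℕ) (_ : w.1 ∣ e.1 ∧ w.2 ∣ e.2), lam e / ((e.1 : ℝ) * e.2) := fun w => by
    conv_rhs => rw [← moebius_mul_totient_div_totient w.1, ← moebius_mul_totient_div_totient w.2]
    rw [heta]
    ring
  have hμ₁ : (μ d₁ : ℝ) ^ 2 = 1 := by
    exact_mod_cast moebius_sq_eq_one_of_squarefree (hd.squarefree_of_dvd (dvd_mul_right _ _))
  have hμ₂ : (μ d₂ : ℝ) ^ 2 = 1 := by
    exact_mod_cast moebius_sq_eq_one_of_squarefree (hd.squarefree_of_dvd (dvd_mul_left _ _))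
  simp_rw [hsummand]
  rw [finsum_multiples_moebius_mul_finsum_multiples
    (hfin.subset ((Function.support_div _ _).trans_subset Set.inter_subset_left))
    (fun e he => by rw [hsq e he, zero_div])]
  calc lam (d₁, d₂) = (μ d₁ : ℝ) ^ 2 * (μ d₂ : ℝ) ^ 2 * lam (d₁, d₂) := by
        rw [hμ₁, hμ₂, one_mul, one_mul]
    _ = _ := by field_simp
end
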